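/- arXiv:2109.06343 — 2 statements merged into one kernel-verified Lean document; each statement's English description precedes it below -/
import Mathlib

section
/- Let f : ℝ^M → ℝ be differentiable, μ-strongly convex and L-smooth with 0 < μ ≤ L < ∞, and let α > 0. Then the gradient-step map x ↦ x − α ∇f(x) is Lipschitz continuous with constant ζ = max{|1 − αμ|, |1 − αL|}: for all x, y ∈ ℝ^M, ‖(x − α∇f(x)) − (y − α∇f(y))‖ ≤ ζ ‖x − y‖. Moreover, if α ∈ (0, 2/L), then ζ < 1, i.e., the map is a contraction. -/
open InnerProductSpace Set

section Aux
variable {E : Type*} [NormedAddCommGroup E] [InnerProductSpace ℝ E] [CompleteSpace E]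

private theorem sqnorm_grad' (z : E) (c : ℝ) :
    HasGradientAt (fun x : E => c * ‖x‖^2) ((2*c) • z) z := by
  rw [hasGradientAt_iff_hasFDerivAt]
  have h : HasFDerivAt (fun x : E => @inner ℝ _ _ x x) (toDual ℝ E ((2:ℝ) • z)) z := by
    have := (hasFDerivAt_id z).inner ℝ (hasFDerivAt_id z)
    refine this.congr_fderiv ?_
    ext w
    simp [real_inner_comm, two_smul]
  have h2 := h.const_mul c
  convert h2 using 2 with x
  · rfl
  · rw [real_inner_self_eq_norm_sq]
  · ext w; simp; ring

private theorem line_hasDerivAt' {p : E → ℝ} {G : E → E} (hg : ∀ z, HasGradientAt p (G z) z)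
    (x v : E) (t : ℝ) :
    HasDerivAt (fun s : ℝ => p (x + s • v)) (@inner ℝ _ _ (G (x + t • v)) v) t := by
  have hline : HasDerivAt (fun s : ℝ => x + s • v) v t := by
    simpa using ((hasDerivAt_id t).smul_const v).const_add x
  have := ((hg (x + t • v)).hasFDerivAt).comp_hasDerivAt t hline
  simp at this
  exact this

private theorem convex_grad_ineq' {p : E → ℝ} {G : E → E} (hg : ∀ z, HasGradientAt p (G z) z)
    (hc : ConvexOn ℝ Set.univ p) (x y : E) :
    p x + @inner ℝ _ _ (G x) (y - x) ≤ p y := by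
  set v := y - x with hv
  have hd : HasDerivAt (fun s : ℝ => p (x + s • v)) (@inner ℝ _ _ (G x) v) 0 := by
    have := line_hasDerivAt' hg x v 0
    simpa using this
  have hslope : ∀ t ∈ Ioc (0:ℝ) 1, slope (fun s : ℝ => p (x + s • v)) 0 t ≤ p y - p x := by
    intro t ht
    have hx1 : x + t • v = (1 - t) • x + t • y := by
      rw [hv]; module
    have hcc : p ((1-t) • x + t • y) ≤ (1-t) * p x + t * p y := hc.2 (mem_univ x) (mem_univ y)
      (by linarith [ht.1.le, ht.2] : (0:ℝ) ≤ 1 - t) ht.1.le (by ring)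
    rw [slope_def_field]
    have h0 : x + (0:ℝ) • v = x := by simp
    rw [sub_zero, div_le_iff₀ ht.1]
    calc p (x + t • v) - p (x + (0:ℝ) • v) = p ((1-t) • x + t • y) - p x := by rw [hx1, h0]
      _ ≤ (1-t) * p x + t * p y - p x := by linarith [hcc]
      _ = (p y - p x) * t := by ring
  have htend := hasDerivAt_iff_tendsto_slope.1 hd
  have htend' : Filter.Tendsto (slope (fun s : ℝ => p (x + s • v)) 0) (nhdsWithin 0 (Ioi 0))
      (nhds (@inner ℝ _ _ (G x) v)) :=
    htend.mono_left (nhdsWithin_mono 0 (fun t ht => ne_of_gt ht))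
  have hle : @inner ℝ _ _ (G x) v ≤ p y - p x := by
    refine le_of_tendsto htend' ?_
    filter_upwards [Ioc_mem_nhdsGT_of_mem (by norm_num : (0:ℝ) ∈ Ico (0:ℝ) 1)] with t ht
    exact hslope t ht
  linarith

private theorem descent_lemma' {p : E → ℝ} {G : E → E} {K : ℝ}
    (hg : ∀ z, HasGradientAt p (G z) z)
    (hlip : ∀ a b, ‖G a - G b‖ ≤ K * ‖a - b‖) (x y : E) :
    p y ≤ p x + @inner ℝ _ _ (G x) (y - x) + K / 2 * ‖y - x‖ ^ 2 := by
  set v := y - x with hv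
  set χ : ℝ → ℝ := fun t => p (x + t • v) - t * @inner ℝ _ _ (G x) v - K * t ^ 2 / 2 * ‖v‖ ^ 2
    with hχ
  have hd : ∀ t : ℝ, HasDerivAt χ
      (@inner ℝ _ _ (G (x + t • v)) v - @inner ℝ _ _ (G x) v - K * t * ‖v‖ ^ 2) t := by
    intro t
    have h1 := line_hasDerivAt' hg x v t
    have h2 : HasDerivAt (fun s : ℝ => s * @inner ℝ _ _ (G x) v) (@inner ℝ _ _ (G x) v) t := by
      simpa using (hasDerivAt_id t).mul_const (@inner ℝ _ _ (G x) v)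
    have h3 : HasDerivAt (fun s : ℝ => K * s ^ 2 / 2 * ‖v‖ ^ 2) (K * t * ‖v‖ ^ 2) t := by
      have h := (((hasDerivAt_pow 2 t).const_mul K).div_const 2).mul_const (‖v‖ ^ 2)
      refine h.congr_deriv ?_
      push_cast
      ring
    have h4 := (h1.sub h2).sub h3
    exact h4
  have hmono : AntitoneOn χ (Icc (0:ℝ) 1) := by
    apply antitoneOn_of_deriv_nonpos (convex_Icc 0 1)
    · exact fun t _ => ((hd t).continuousAt).continuousWithinAt
    · intro t ht
      exact ((hd t).differentiableAt).differentiableWithinAt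
    · intro t ht
      rw [interior_Icc] at ht
      rw [(hd t).deriv]
      have hb : @inner ℝ _ _ (G (x + t • v) - G x) v ≤ K * t * ‖v‖ ^ 2 := by
        calc @inner ℝ _ _ (G (x + t • v) - G x) v ≤ ‖G (x + t • v) - G x‖ * ‖v‖ :=
              real_inner_le_norm _ _
          _ ≤ (K * ‖(x + t • v) - x‖) * ‖v‖ := by
              have := hlip (x + t • v) x
              nlinarith [norm_nonneg v]
          _ = K * t * ‖v‖ ^ 2 := by
              rw [add_sub_cancel_left, norm_smul, Real.norm_eq_abs, abs_of_pos ht.1]; ring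
      rw [inner_sub_left] at hb
      linarith
  have h01 := hmono (left_mem_Icc.2 zero_le_one) (right_mem_Icc.2 zero_le_one) zero_le_one
  have e0 : χ 0 = p x := by simp [hχ]
  have e1 : χ 1 = p y - @inner ℝ _ _ (G x) v - K / 2 * ‖v‖ ^ 2 := by
    simp [hχ, hv]
  rw [e0, e1] at h01
  linarith

private theorem bh_step' {p : E → ℝ} {G : E → E} {K : ℝ} (hK : 0 < K)
    (lower : ∀ a b : E, p a + @inner ℝ _ _ (G a) (b - a) ≤ p b)
    (upper : ∀ a b : E, p b ≤ p a + @inner ℝ _ _ (G a) (b - a) + K / 2 * ‖b - a‖ ^ 2)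
    (a b : E) :
    p a + @inner ℝ _ _ (G a) (b - a) + (2 * K)⁻¹ * ‖G b - G a‖ ^ 2 ≤ p b := by
  set w := G b - G a with hw
  set z := b - K⁻¹ • w with hz
  have h1 := lower a z
  have h2 := upper b z
  have e1 : z - a = (b - a) - K⁻¹ • w := by rw [hz]; abel
  have e2 : z - b = -(K⁻¹ • w) := by rw [hz]; abel
  have e3 : ‖z - b‖ ^ 2 = K⁻¹ ^ 2 * ‖w‖ ^ 2 := by
    rw [e2, norm_neg, norm_smul, Real.norm_eq_abs, abs_of_pos (inv_pos.2 hK), mul_pow]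
  have e4 : @inner ℝ _ _ (G a) (z - a) =
      @inner ℝ _ _ (G a) (b - a) - K⁻¹ * @inner ℝ _ _ (G a) w := by
    rw [e1, inner_sub_right, real_inner_smul_right]
  have e5 : @inner ℝ _ _ (G b) (z - b) = - (K⁻¹ * @inner ℝ _ _ (G b) w) := by
    rw [e2, inner_neg_right, real_inner_smul_right]
  have e6 : @inner ℝ _ _ (G b) w - @inner ℝ _ _ (G a) w = ‖w‖ ^ 2 := by
    rw [← inner_sub_left, ← hw, real_inner_self_eq_norm_sq]
  rw [e4] at h1
  rw [e5, e3] at h2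
  have hq : K / 2 * (K⁻¹ ^ 2 * ‖w‖ ^ 2) = (2 * K)⁻¹ * ‖w‖ ^ 2 := by
    field_simp
  have e6' : K⁻¹ * @inner ℝ _ _ (G b) w - K⁻¹ * @inner ℝ _ _ (G a) w = K⁻¹ * ‖w‖ ^ 2 := by
    rw [← mul_sub, e6]
  have hid : K⁻¹ * ‖w‖ ^ 2 = 2 * ((2 * K)⁻¹ * ‖w‖ ^ 2) := by
    field_simp
  linarith [h1, h2]

private theorem bh_cocoercive' {p : E → ℝ} {G : E → E} {K : ℝ} (hK : 0 < K)
    (lower : ∀ a b : E, p a + @inner ℝ _ _ (G a) (b - a) ≤ p b)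
    (upper : ∀ a b : E, p b ≤ p a + @inner ℝ _ _ (G a) (b - a) + K / 2 * ‖b - a‖ ^ 2)
    (a b : E) :
    ‖G b - G a‖ ^ 2 ≤ K * @inner ℝ _ _ (G b - G a) (b - a) := by
  have h1 := bh_step' hK lower upper a b
  have h2 := bh_step' hK lower upper b a
  have e1 : ‖G a - G b‖ = ‖G b - G a‖ := norm_sub_rev _ _
  rw [e1] at h2
  have e2 : @inner ℝ _ _ (G b - G a) (b - a) =
      @inner ℝ _ _ (G b) (b - a) - @inner ℝ _ _ (G a) (b - a) := inner_sub_left _ _ _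
  have e3 : @inner ℝ _ _ (G b) (a - b) = - @inner ℝ _ _ (G b) (b - a) := by
    rw [← inner_neg_right]; congr 1; abel
  rw [e3] at h2
  have hK' : (0:ℝ) < (2 * K)⁻¹ := by positivity
  have hfin : 2 * ((2 * K)⁻¹ * ‖G b - G a‖ ^ 2) ≤ @inner ℝ _ _ (G b - G a) (b - a) := by
    rw [e2]; linarith
  have h22 : (2:ℝ) * (2 * K)⁻¹ = K⁻¹ := by field_simp
  rw [← mul_assoc, h22] at hfin
  calc ‖G b - G a‖ ^ 2 = K * (K⁻¹ * ‖G b - G a‖ ^ 2) := by field_simp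
    _ ≤ K * @inner ℝ _ _ (G b - G a) (b - a) := mul_le_mul_of_nonneg_left hfin hK.le


set_option maxHeartbeats 1000000 in
private theorem grad_step_contract {E : Type*} [NormedAddCommGroup E] [InnerProductSpace ℝ E]
    [CompleteSpace E]
    (f : E → ℝ) (g : E → E)
    (hgrad : ∀ x, HasGradientAt f (g x) x)
    (μ L : ℝ) (hμ : 0 < μ) (hμL : μ ≤ L)
    (hsc : ConvexOn ℝ Set.univ (fun x => f x - μ / 2 * ‖x‖ ^ 2))
    (hsm : ∀ x y, ‖g x - g y‖ ≤ L * ‖x - y‖)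
    (α : ℝ) (hα : 0 < α) (x y : E) :
    ‖(x - α • g x) - (y - α • g y)‖ ≤ max |1 - α * μ| |1 - α * L| * ‖x - y‖ := by
  have hL : 0 < L := lt_of_lt_of_le hμ hμL
  set h : E → ℝ := fun z => f z - μ / 2 * ‖z‖ ^ 2 with hh
  set G1 : E → E := fun z => g z - μ • z with hG1
  -- gradient of h
  have hgrad1 : ∀ z : E, HasGradientAt h (G1 z) z := by
    intro z
    have hsq : HasGradientAt (fun x : E => μ / 2 * ‖x‖ ^ 2) (μ • z) z := by
      have := sqnorm_grad' z (μ / 2)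
      rwa [show 2 * (μ / 2) = μ by ring] at this
    rw [hasGradientAt_iff_hasFDerivAt]
    have := ((hgrad z).hasFDerivAt).sub (hasGradientAt_iff_hasFDerivAt.1 hsq)
    rwa [← map_sub] at this
  -- first-order lower bound for h (convexity)
  have lower_h : ∀ a b : E, h a + @inner ℝ _ _ (G1 a) (b - a) ≤ h b :=
    fun a b => convex_grad_ineq' hgrad1 hsc a b
  -- descent lemma for f
  have DL : ∀ a b : E, f b ≤ f a + @inner ℝ _ _ (g a) (b - a) + L / 2 * ‖b - a‖ ^ 2 :=
    fun a b => descent_lemma' hgrad hsm a b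
  -- norm expansion identity
  have nexp : ∀ a b : E, ‖b‖ ^ 2 = ‖a‖ ^ 2 + 2 * @inner ℝ _ _ a (b - a) + ‖b - a‖ ^ 2 := by
    intro a b
    have := @norm_add_sq_real E _ _ a (b - a)
    simpa using this
  -- upper bound for h with constant L - μ
  have upper_h : ∀ a b : E, h b ≤ h a + @inner ℝ _ _ (G1 a) (b - a) + (L - μ) / 2 * ‖b - a‖ ^ 2 := by
    intro a b
    have hdl := DL a b
    have hn := nexp a b
    have hi : @inner ℝ _ _ (G1 a) (b - a) =
        @inner ℝ _ _ (g a) (b - a) - μ * @inner ℝ _ _ a (b - a) := by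
      rw [hG1]; simp [inner_sub_left, real_inner_smul_left]
    simp only [hh]
    rw [hi]
    nlinarith [hdl, hn]
  -- strong convexity lower bound for f
  have SC : ∀ a b : E, f a + @inner ℝ _ _ (g a) (b - a) + μ / 2 * ‖b - a‖ ^ 2 ≤ f b := by
    intro a b
    have hl := lower_h a b
    have hn := nexp a b
    have hi : @inner ℝ _ _ (G1 a) (b - a) =
        @inner ℝ _ _ (g a) (b - a) - μ * @inner ℝ _ _ a (b - a) := by
      rw [hG1]; simp [inner_sub_left, real_inner_smul_left]
    simp only [hh] at hl
    rw [hi] at hl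
    nlinarith [hl, hn]
  set d : E := x - y with hd
  set e : E := g x - g y with he
  set A := ‖d‖ ^ 2 with hA
  set B := @inner ℝ _ _ e d with hB
  set C := ‖e‖ ^ 2 with hC
  have hA0 : 0 ≤ A := sq_nonneg _
  -- (1) strong monotonicity
  have hmo : μ * A ≤ B := by
    have h1 := SC x y
    have h2 := SC y x
    have e1 : @inner ℝ _ _ (g x) (y - x) = - @inner ℝ _ _ (g x) d := by
      rw [← inner_neg_right]; congr 1; rw [hd]; abel
    have e2 : @inner ℝ _ _ (g y) (x - y) = @inner ℝ _ _ (g y) d := by rw [hd]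
    have e3 : ‖y - x‖ = ‖d‖ := by rw [hd, ← norm_neg]; congr 1; abel
    have e4 : @inner ℝ _ _ (g x) d - @inner ℝ _ _ (g y) d = B := by
      rw [hB, he, inner_sub_left]
    rw [e1, e3] at h1
    rw [e2] at h2
    have e5 : ‖x - y‖ = ‖d‖ := by rw [hd]
    rw [e5] at h2
    rw [hA]
    linarith
  -- (2) Cauchy-Schwarz with L-Lipschitz
  have hcs : B ≤ L * A := by
    calc B ≤ ‖e‖ * ‖d‖ := real_inner_le_norm _ _
      _ ≤ (L * ‖d‖) * ‖d‖ := by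
          have := hsm x y
          rw [← he, ← hd] at this
          nlinarith [norm_nonneg d]
      _ = L * A := by rw [hA]; ring
  have hC' : C ≤ L ^ 2 * A := by
    have := hsm x y
    rw [← he, ← hd] at this
    rw [hA, hC]
    nlinarith [norm_nonneg e, norm_nonneg d]
  -- (3) interpolation inequality
  have hint : C + μ * L * A ≤ (μ + L) * B := by
    rcases eq_or_lt_of_le hμL with heq | hlt
    · subst heq
      nlinarith [hmo, hC', hA0, hμ]
    · have hK : (0 : ℝ) < L - μ := by linarith
      have hbh := bh_cocoercive' hK lower_h upper_h y x
      have eG : G1 x - G1 y = e - μ • d := by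
        rw [hG1, he, hd]; simp [smul_sub]; abel
      rw [eG, ← hd] at hbh
      have en : ‖e - μ • d‖ ^ 2 = C - 2 * μ * B + μ ^ 2 * A := by
        rw [@norm_sub_sq_real E]
        rw [real_inner_smul_right, norm_smul, Real.norm_eq_abs, mul_pow, sq_abs]
        rw [← hC, ← hB, ← hA]
        ring
      have ei : @inner ℝ _ _ (e - μ • d) d = B - μ * A := by
        rw [inner_sub_left, real_inner_smul_left, ← hB, real_inner_self_eq_norm_sq, ← hA]
      rw [en, ei] at hbh
      nlinarith [hbh]
  -- expand the step map difference
  have estep : (x - α • g x) - (y - α • g y) = d - α • e := by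
    rw [hd, he, smul_sub]; abel
  rw [estep]
  have hnd : ‖d - α • e‖ ^ 2 = A - 2 * α * B + α ^ 2 * C := by
    rw [@norm_sub_sq_real E, real_inner_smul_right, norm_smul, Real.norm_eq_abs, mul_pow,
      sq_abs, ← hA, ← hC, real_inner_comm e d, ← hB]
    ring
  set ζ := max |1 - α * μ| |1 - α * L| with hζ
  have hζ0 : 0 ≤ ζ := le_trans (abs_nonneg _) (le_max_left _ _)
  have hsq : ‖d - α • e‖ ^ 2 ≤ (ζ * ‖d‖) ^ 2 := by
    rcases le_or_gt (α * (μ + L)) 2 with hcase | hcase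
    · have hb1 : ‖d - α • e‖ ^ 2 ≤ (1 - α * μ) ^ 2 * A := by
        rw [hnd]
        have p1 : 0 ≤ α ^ 2 * ((μ + L) * B - μ * L * A - C) := by nlinarith [hint]
        have p2 : 0 ≤ α * (2 - α * (μ + L)) * (B - μ * A) := by
          apply mul_nonneg (mul_nonneg hα.le (by linarith)) (by linarith)
        nlinarith [p1, p2]
      have hle : (1 - α * μ) ^ 2 * A ≤ (ζ * ‖d‖) ^ 2 := by
        have hz : (1 - α * μ) ^ 2 ≤ ζ ^ 2 := by
          have h1 : |1 - α * μ| ≤ ζ := le_max_left _ _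
          nlinarith [abs_nonneg (1 - α * μ), sq_abs (1 - α * μ)]
        rw [mul_pow, hA]
        nlinarith [sq_nonneg ‖d‖]
      linarith
    · have hb1 : ‖d - α • e‖ ^ 2 ≤ (1 - α * L) ^ 2 * A := by
        rw [hnd]
        have p1 : 0 ≤ α ^ 2 * ((μ + L) * B - μ * L * A - C) := by nlinarith [hint]
        have p2 : 0 ≤ α * (α * (μ + L) - 2) * (L * A - B) := by
          apply mul_nonneg (mul_nonneg hα.le (by linarith)) (by linarith)
        nlinarith [p1, p2]
      have hle : (1 - α * L) ^ 2 * A ≤ (ζ * ‖d‖) ^ 2 := by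
        have hz : (1 - α * L) ^ 2 ≤ ζ ^ 2 := by
          have h1 : |1 - α * L| ≤ ζ := le_max_right _ _
          nlinarith [abs_nonneg (1 - α * L), sq_abs (1 - α * L)]
        rw [mul_pow, hA]
        nlinarith [sq_nonneg ‖d‖]
      linarith
  have hfin : ‖d - α • e‖ ≤ ζ * ‖d‖ := by
    have h0 : 0 ≤ ζ * ‖d‖ := mul_nonneg hζ0 (norm_nonneg _)
    nlinarith [norm_nonneg (d - α • e), hsq]
  rw [hd] at hfin
  exact hfin

end Aux

open MeasureTheory

/-- **Lipschitz constant of the gradient-step map, and contraction for small step sizes.**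
If `f : ℝ^M → ℝ` is differentiable (with gradient `g`), `μ`-strongly convex and `L`-smooth
with `0 < μ ≤ L < ∞`, and `α > 0`, then the map `x ↦ x − α g(x)` is
`ζ`-Lipschitz with `ζ = max{|1 − αμ|, |1 − αL|}`; moreover if `α < 2/L` then `ζ < 1`. -/
theorem gradient_step_lipschitz_and_contraction (M : ℕ)
    (f : EuclideanSpace ℝ (Fin M) → ℝ)
    (g : EuclideanSpace ℝ (Fin M) → EuclideanSpace ℝ (Fin M))
    (hgrad : ∀ x, HasGradientAt f (g x) x)
    (μ L : ℝ) (hμ : 0 < μ) (hμL : μ ≤ L)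
    (hsc : ConvexOn ℝ Set.univ (fun x => f x - μ / 2 * ‖x‖ ^ 2))
    (hsm : ∀ x y, ‖g x - g y‖ ≤ L * ‖x - y‖)
    (α : ℝ) (hα : 0 < α) :
    (∀ x y : EuclideanSpace ℝ (Fin M),
      ‖(x - α • g x) - (y - α • g y)‖ ≤ max |1 - α * μ| |1 - α * L| * ‖x - y‖) ∧
    (α < 2 / L → max |1 - α * μ| |1 - α * L| < 1) := by
  have hL : 0 < L := lt_of_lt_of_le hμ hμL
  constructor
  · exact fun x y => grad_step_contract f g hgrad μ L hμ hμL hsc hsm α hα x y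
  · intro hαL
    have hαL2 : α * L < 2 := by
      rw [lt_div_iff₀ hL] at hαL
      linarith
    have hαμ : α * μ ≤ α * L := mul_le_mul_of_nonneg_left hμL hα.le
    have hαμ0 : 0 < α * μ := mul_pos hα hμ
    apply max_lt <;> rw [abs_lt] <;> constructor <;> linarith
end

section
/- Fix p ∈ (0,1] and ζ ∈ (0,1), and for each integer t ≥ 1 define η(t) := sup_{k ≥ 1} (1 − p + ζ^k p)^{t/k} / √k, where the supremum is over real k ≥ 1. Then: (a) 0 < η(t) < 1 for every t ≥ 1; (b) the map t ↦ η(t) is nonincreasing; and (c) η(t) → 0 as t → ∞. -/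
open MeasureTheory

/-- For `p ∈ (0,1]`, `ζ ∈ (0,1)` and an integer `t ≥ 1`,
`η(t) = sup_{k ≥ 1} (1 − p + ζ^k p)^{t/k} / √k`, the supremum being over real `k ≥ 1`. -/
noncomputable def eta (p ζ : ℝ) (t : ℕ) : ℝ :=
  ⨆ k : {k : ℝ // 1 ≤ k}, (1 - p + ζ ^ (k : ℝ) * p) ^ ((t : ℝ) / (k : ℝ)) / Real.sqrt (k : ℝ)

private lemma sqrt_tendsto_atTop' : Filter.Tendsto Real.sqrt Filter.atTop Filter.atTop := by
  rw [Filter.tendsto_atTop_atTop]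
  intro b
  refine ⟨(max b 0) ^ 2, fun a ha => ?_⟩
  have h1 : Real.sqrt ((max b 0) ^ 2) ≤ Real.sqrt a := Real.sqrt_le_sqrt ha
  rw [Real.sqrt_sq (le_max_right b 0)] at h1
  exact le_trans (le_max_left b 0) h1

/-- **Properties of the function `η`.**
(a) `0 < η(t) < 1` for every `t ≥ 1`; (b) `t ↦ η(t)` is nonincreasing;
(c) `η(t) → 0` as `t → ∞`. -/
theorem eta_properties (p ζ : ℝ) (hp : p ∈ Set.Ioc (0 : ℝ) 1) (hζ : ζ ∈ Set.Ioo (0 : ℝ) 1) :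
    (∀ t : ℕ, 1 ≤ t → 0 < eta p ζ t ∧ eta p ζ t < 1) ∧
    (∀ s t : ℕ, 1 ≤ s → s ≤ t → eta p ζ t ≤ eta p ζ s) ∧
    Filter.Tendsto (fun t : ℕ => eta p ζ t) Filter.atTop (nhds 0) := by
  obtain ⟨hp0, hp1⟩ := hp
  obtain ⟨hz0, hz1⟩ := hζ
  haveI : Nonempty {k : ℝ // 1 ≤ k} := ⟨⟨1, le_rfl⟩⟩
  set c : ℝ := 1 - p + ζ * p with hc
  have hc1 : c < 1 := by nlinarith
  have hb0 : ∀ k : ℝ, 0 < 1 - p + ζ ^ k * p := by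
    intro k
    have := Real.rpow_pos_of_pos hz0 k
    nlinarith
  have hc0 : 0 < c := by have := hb0 1; rwa [Real.rpow_one] at this
  have hbc : ∀ k : ℝ, 1 ≤ k → 1 - p + ζ ^ k * p ≤ c := by
    intro k hk
    have h : ζ ^ k ≤ ζ ^ (1 : ℝ) := Real.rpow_le_rpow_of_exponent_ge hz0 hz1.le hk
    rw [Real.rpow_one] at h
    nlinarith
  have hb1 : ∀ k : ℝ, 0 ≤ k → 1 - p + ζ ^ k * p ≤ 1 := by
    intro k hk
    have h : ζ ^ k ≤ 1 := Real.rpow_le_one hz0.le hz1.le hk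
    nlinarith
  have hkpos : ∀ k : {k : ℝ // 1 ≤ k}, (0 : ℝ) < (k : ℝ) := fun k => lt_of_lt_of_le one_pos k.2
  have hsk1 : ∀ k : {k : ℝ // 1 ≤ k}, (1 : ℝ) ≤ Real.sqrt (k : ℝ) :=
    fun k => Real.one_le_sqrt.mpr k.2
  have hskpos : ∀ k : {k : ℝ // 1 ≤ k}, (0 : ℝ) < Real.sqrt (k : ℝ) :=
    fun k => lt_of_lt_of_le one_pos (hsk1 k)
  have hexp_nonneg : ∀ (t : ℕ) (k : {k : ℝ // 1 ≤ k}), (0 : ℝ) ≤ (t : ℝ) / (k : ℝ) :=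
    fun t k => div_nonneg (Nat.cast_nonneg t) (hkpos k).le
  -- numerator ≤ 1
  have hnum_le_one : ∀ (t : ℕ) (k : {k : ℝ // 1 ≤ k}),
      (1 - p + ζ ^ (k : ℝ) * p) ^ ((t : ℝ) / (k : ℝ)) ≤ 1 :=
    fun t k => Real.rpow_le_one (hb0 _).le (hb1 _ (le_trans zero_le_one k.2)) (hexp_nonneg t k)
  -- each term is ≤ 1
  have hterm_le_one : ∀ (t : ℕ) (k : {k : ℝ // 1 ≤ k}),
      (1 - p + ζ ^ (k : ℝ) * p) ^ ((t : ℝ) / (k : ℝ)) / Real.sqrt (k : ℝ) ≤ 1 := by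
    intro t k
    exact le_trans (div_le_self (Real.rpow_pos_of_pos (hb0 _) _).le (hsk1 k)) (hnum_le_one t k)
  have hbdd : ∀ t : ℕ, BddAbove (Set.range fun k : {k : ℝ // 1 ≤ k} =>
      (1 - p + ζ ^ (k : ℝ) * p) ^ ((t : ℝ) / (k : ℝ)) / Real.sqrt (k : ℝ)) := by
    intro t
    exact ⟨1, by rintro x ⟨k, rfl⟩; exact hterm_le_one t k⟩
  -- each term is ≤ c ^ (t/k) / √k
  have hterm_le_c : ∀ (t : ℕ) (k : {k : ℝ // 1 ≤ k}),
      (1 - p + ζ ^ (k : ℝ) * p) ^ ((t : ℝ) / (k : ℝ)) / Real.sqrt (k : ℝ)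
        ≤ c ^ ((t : ℝ) / (k : ℝ)) / Real.sqrt (k : ℝ) := by
    intro t k
    exact (div_le_div_iff_of_pos_right (hskpos k)).mpr
      (Real.rpow_le_rpow (hb0 _).le (hbc _ k.2) (hexp_nonneg t k))
  -- positivity
  have hpos : ∀ t : ℕ, 0 < eta p ζ t := by
    intro t
    have h := le_ciSup (hbdd t) (⟨1, le_rfl⟩ : {k : ℝ // 1 ≤ k})
    refine lt_of_lt_of_le ?_ h
    simp only [Real.sqrt_one, div_one]
    exact Real.rpow_pos_of_pos (hb0 _) _
  refine ⟨?_, ?_, ?_⟩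
  · -- (a)
    intro t ht
    refine ⟨hpos t, ?_⟩
    have hM : max (c ^ ((1:ℝ)/2)) (Real.sqrt 2)⁻¹ < 1 := by
      apply max_lt
      · exact Real.rpow_lt_one hc0.le hc1 (by norm_num)
      · rw [inv_lt_one_iff₀]
        right
        rw [show (1:ℝ) = Real.sqrt 1 by simp]
        exact Real.sqrt_lt_sqrt (by norm_num) (by norm_num)
    refine lt_of_le_of_lt (ciSup_le fun k => ?_) hM
    rcases le_total (k : ℝ) 2 with hk2 | hk2
    · refine le_trans (hterm_le_c t k) (le_trans ?_ (le_max_left _ _))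
      calc c ^ ((t : ℝ) / (k : ℝ)) / Real.sqrt (k : ℝ)
          ≤ c ^ ((t : ℝ) / (k : ℝ)) :=
            div_le_self (Real.rpow_pos_of_pos hc0 _).le (hsk1 k)
        _ ≤ c ^ ((1:ℝ)/2) := by
            apply Real.rpow_le_rpow_of_exponent_ge hc0 hc1.le
            rw [div_le_div_iff₀ (by norm_num) (hkpos k)]
            have ht' : (1 : ℝ) ≤ (t : ℝ) := by exact_mod_cast ht
            nlinarith
    · refine le_trans ?_ (le_max_right _ _)
      calc (1 - p + ζ ^ (k : ℝ) * p) ^ ((t : ℝ) / (k : ℝ)) / Real.sqrt (k : ℝ)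
          ≤ 1 / Real.sqrt (k : ℝ) :=
            (div_le_div_iff_of_pos_right (hskpos k)).mpr (hnum_le_one t k)
        _ = (Real.sqrt (k : ℝ))⁻¹ := one_div _
        _ ≤ (Real.sqrt 2)⁻¹ :=
            inv_anti₀ (Real.sqrt_pos.mpr (by norm_num)) (Real.sqrt_le_sqrt hk2)
  · -- (b) monotonicity
    intro s t hs hst
    refine ciSup_le fun k => le_trans ?_ (le_ciSup (hbdd s) k)
    refine (div_le_div_iff_of_pos_right (hskpos k)).mpr ?_
    apply Real.rpow_le_rpow_of_exponent_ge (hb0 _) (hb1 _ (le_trans zero_le_one k.2))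
    exact (div_le_div_iff_of_pos_right (hkpos k)).mpr (by exact_mod_cast hst)
  · -- (c) tendsto 0
    have hub : ∀ t : ℕ, 1 ≤ t → eta p ζ t ≤
        max (c ^ Real.sqrt (t : ℝ)) (Real.sqrt (Real.sqrt (t : ℝ)))⁻¹ := by
      intro t ht
      have ht1 : (1 : ℝ) ≤ (t : ℝ) := by exact_mod_cast ht
      have hst0 : 0 < Real.sqrt (t : ℝ) := Real.sqrt_pos.mpr (by linarith)
      refine ciSup_le fun k => ?_
      rcases le_total (k : ℝ) (Real.sqrt (t : ℝ)) with hk | hk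
      · refine le_trans (hterm_le_c t k) (le_trans ?_ (le_max_left _ _))
        calc c ^ ((t : ℝ) / (k : ℝ)) / Real.sqrt (k : ℝ)
            ≤ c ^ ((t : ℝ) / (k : ℝ)) :=
              div_le_self (Real.rpow_pos_of_pos hc0 _).le (hsk1 k)
          _ ≤ c ^ Real.sqrt (t : ℝ) := by
              apply Real.rpow_le_rpow_of_exponent_ge hc0 hc1.le
              calc Real.sqrt (t : ℝ) = (t : ℝ) / Real.sqrt (t : ℝ) := Real.div_sqrt.symm
                _ ≤ (t : ℝ) / (k : ℝ) :=
                    div_le_div_of_nonneg_left (by linarith) (hkpos k) hk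
      · refine le_trans ?_ (le_max_right _ _)
        calc (1 - p + ζ ^ (k : ℝ) * p) ^ ((t : ℝ) / (k : ℝ)) / Real.sqrt (k : ℝ)
            ≤ 1 / Real.sqrt (k : ℝ) :=
              (div_le_div_iff_of_pos_right (hskpos k)).mpr (hnum_le_one t k)
          _ = (Real.sqrt (k : ℝ))⁻¹ := one_div _
          _ ≤ (Real.sqrt (Real.sqrt (t : ℝ)))⁻¹ :=
              inv_anti₀ (Real.sqrt_pos.mpr hst0) (Real.sqrt_le_sqrt hk)
    have hnat : Filter.Tendsto (fun t : ℕ => (t : ℝ)) Filter.atTop Filter.atTop :=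
      tendsto_natCast_atTop_atTop
    have h1 : Filter.Tendsto (fun t : ℕ => c ^ Real.sqrt (t : ℝ)) Filter.atTop (nhds 0) :=
      (tendsto_rpow_atTop_of_base_lt_one c (by linarith) hc1).comp
        (sqrt_tendsto_atTop'.comp hnat)
    have h2 : Filter.Tendsto (fun t : ℕ => (Real.sqrt (Real.sqrt (t : ℝ)))⁻¹)
        Filter.atTop (nhds 0) :=
      tendsto_inv_atTop_zero.comp
        (sqrt_tendsto_atTop'.comp (sqrt_tendsto_atTop'.comp hnat))
    have hmax : Filter.Tendsto
        (fun t : ℕ => max (c ^ Real.sqrt (t : ℝ)) (Real.sqrt (Real.sqrt (t : ℝ)))⁻¹)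
        Filter.atTop (nhds 0) := by
      have := h1.max h2
      simpa using this
    refine tendsto_of_tendsto_of_tendsto_of_le_of_le' tendsto_const_nhds hmax ?_ ?_
    · exact Filter.Eventually.of_forall fun t => (hpos t).le
    · filter_upwards [Filter.eventually_ge_atTop 1] with t ht using hub t ht
end
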